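/- Let k > 0, let f_k(t) = k t on [-1/2,1/2], and let ε > 0 satisfy ε² ≤ k²/24. Then ω(ε, f_k, F_m) = (3k)^{1/3} ε^{2/3}. -/

import Mathlib

/-! If `g` is nondecreasing with `g 0 = c > 0`, then `g t - k t ≥ c - k t ≥ 0` on `[0, c / k]`,
so `∫ (g t - k t)² ≥ ∫₀^{c/k} (c - k t)² = c³ / (3k)`; when `c / k > 1/2` the integral over
`[0, 1/2]` alone already exceeds `k² / 24 ≥ ε²`. Applying this to `t ↦ -g (-t)` as well gives
`|g 0|³ ≤ 3kε²`. Equality is attained by raising `k t` to the constant `c` on `[0, c / k]`, an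
interval that fits in `[-1/2, 1/2]` exactly when `ε² ≤ k² / 24`. -/

open MeasureTheory

/-- The local modulus of continuity of `f` at `0` over the class of nondecreasing
functions on `[-1/2, 1/2]`. -/
noncomputable def omegaMonotone (ε : ℝ) (f : ℝ → ℝ) : ℝ :=
  sSup {d : ℝ | ∃ g : ℝ → ℝ, MonotoneOn g (Set.Icc (-(1:ℝ)/2) (1/2)) ∧
    (∫ t in (-(1:ℝ)/2)..(1/2), (g t - f t)^2) ≤ ε^2 ∧ d = |g 0 - f 0|}

open Set

theorem MonotoneOn.intervalIntegrable_sq_sub {f g : ℝ → ℝ} {a b : ℝ}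
    (hf : MonotoneOn f (uIcc a b)) (hg : MonotoneOn g (uIcc a b)) :
    IntervalIntegrable (fun t => (f t - g t) ^ 2) volume a b :=
  IntegrableOn.intervalIntegrable ((hf.memLp_isCompact isCompact_uIcc).sub
    (hg.memLp_isCompact isCompact_uIcc)).integrable_sq

theorem integral_sq_sub_mul (d k a b : ℝ) (hk : k ≠ 0) :
    ∫ t in a..b, (d - k * t) ^ 2 = ((d - k * a) ^ 3 - (d - k * b) ^ 3) / (3 * k) := by
  rw [intervalIntegral.integral_comp_sub_mul (fun x => x ^ 2) hk, integral_pow, smul_eq_mul]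
  field_simp
  ring

theorem cube_sub_cube_le_integral_sq_sub_mul {g : ℝ → ℝ} {k b m : ℝ} (hk : 0 < k)
    (hg : MonotoneOn g (Icc 0 b)) (hm : 0 ≤ m) (hmb : m ≤ b) (hkm : k * m ≤ g 0) :
    (g 0 ^ 3 - (g 0 - k * m) ^ 3) / (3 * k) ≤ ∫ t in 0..b, (g t - k * t) ^ 2 := by
  have hb : 0 ≤ b := hm.trans hmb
  have hint : IntervalIntegrable (fun t => (g t - k * t) ^ 2) volume 0 b := by
    rw [← uIcc_of_le hb] at hg
    exact hg.intervalIntegrable_sq_sub (g := fun t => k * t)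
      ((monotone_id.const_mul hk.le).monotoneOn _)
  calc (g 0 ^ 3 - (g 0 - k * m) ^ 3) / (3 * k) = ∫ t in 0..m, (g 0 - k * t) ^ 2 := by
        rw [integral_sq_sub_mul _ _ _ _ hk.ne', mul_zero, sub_zero]
    _ ≤ ∫ t in 0..m, (g t - k * t) ^ 2 := by
        refine intervalIntegral.integral_mono_on hm
          ((by fun_prop : Continuous fun t => (g 0 - k * t) ^ 2).intervalIntegrable _ _)
          (hint.mono_set (uIcc_subset_uIcc_left ((uIcc_of_le hb).symm ▸ ⟨hm, hmb⟩)))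
          fun t ht => ?_
        have hgt : g 0 ≤ g t := hg ⟨le_rfl, hb⟩ ⟨ht.1, ht.2.trans hmb⟩ ht.1
        have hkt : k * t ≤ k * m := mul_le_mul_of_nonneg_left ht.2 hk.le
        exact pow_le_pow_left₀ (by linarith) (by linarith) 2
    _ ≤ ∫ t in 0..b, (g t - k * t) ^ 2 :=
        intervalIntegral.integral_mono_interval le_rfl hm hmb
          (ae_of_all _ fun _ => sq_nonneg _) hint

theorem pow_three_le_of_integral_sq_sub_mul_le {g : ℝ → ℝ} {k b δ : ℝ} (hk : 0 < k)
    (hb : 0 < b) (hg : MonotoneOn g (Icc 0 b)) (hI : ∫ t in 0..b, (g t - k * t) ^ 2 ≤ δ)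
    (hδ : δ ≤ k ^ 2 * b ^ 3 / 3) :
    g 0 ^ 3 ≤ 3 * k * δ := by
  rcases le_or_gt (g 0) 0 with hg0 | hg0
  · have hδ0 : 0 ≤ δ :=
      (intervalIntegral.integral_nonneg hb.le fun _ _ => sq_nonneg _).trans hI
    nlinarith [Odd.pow_nonpos (by decide : Odd 3) hg0]
  rcases le_or_gt (g 0) (k * b) with hg0b | hg0b
  · have hkm : k * (g 0 / k) = g 0 := mul_div_cancel₀ _ hk.ne'
    have h := cube_sub_cube_le_integral_sq_sub_mul hk hg (div_nonneg hg0.le hk.le)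
      ((div_le_iff₀' hk).2 hg0b) hkm.le
    rw [hkm, sub_self, div_le_iff₀ (by positivity)] at h
    nlinarith
  · have h := cube_sub_cube_le_integral_sq_sub_mul hk hg hb.le le_rfl hg0b.le
    rw [div_le_iff₀ (by positivity)] at h
    nlinarith [mul_pos (mul_pos hk hb) (sub_pos.2 hg0b), mul_pos hk hb]

theorem abs_pow_three_le_of_integral_sq_sub_mul_le {g : ℝ → ℝ} {k b δ : ℝ} (hk : 0 < k)
    (hb : 0 < b) (hg : MonotoneOn g (Icc (-b) b))
    (hI : ∫ t in -b..b, (g t - k * t) ^ 2 ≤ δ) (hδ : δ ≤ k ^ 2 * b ^ 3 / 3) :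
    |g 0| ^ 3 ≤ 3 * k * δ := by
  have hint : IntervalIntegrable (fun t => (g t - k * t) ^ 2) volume (-b) b := by
    rw [← uIcc_of_le (by linarith : -b ≤ b)] at hg
    exact hg.intervalIntegrable_sq_sub (g := fun t => k * t)
      ((monotone_id.const_mul hk.le).monotoneOn _)
  have h0 : (0 : ℝ) ∈ uIcc (-b) b := by rw [uIcc_of_le (by linarith)]; constructor <;> linarith
  have hsplit := intervalIntegral.integral_add_adjacent_intervals
    (hint.mono_set (uIcc_subset_uIcc_left h0)) (hint.mono_set (uIcc_subset_uIcc_right h0))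
  have hneg : 0 ≤ ∫ t in -b..0, (g t - k * t) ^ 2 :=
    intervalIntegral.integral_nonneg (by linarith) fun _ _ => sq_nonneg _
  have hpos : 0 ≤ ∫ t in 0..b, (g t - k * t) ^ 2 :=
    intervalIntegral.integral_nonneg hb.le fun _ _ => sq_nonneg _
  have hright : g 0 ^ 3 ≤ 3 * k * δ :=
    pow_three_le_of_integral_sq_sub_mul_le hk hb (hg.mono (Icc_subset_Icc (by linarith) le_rfl))
      (by linarith) hδ
  have hreflect : ∫ t in 0..b, (-g (-t) - k * t) ^ 2 = ∫ t in -b..0, (g t - k * t) ^ 2 := by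
    rw [← neg_zero, ← intervalIntegral.integral_comp_neg fun t => (g t - k * t) ^ 2, neg_zero]
    congr 1
    ext t
    ring
  have hleft : (-g 0) ^ 3 ≤ 3 * k * δ := by
    simpa using pow_three_le_of_integral_sq_sub_mul_le (g := fun t => -g (-t)) hk hb
      (fun s hs t ht hst => neg_le_neg (hg ⟨by linarith [ht.2], by linarith [ht.1]⟩
        ⟨by linarith [hs.2], by linarith [hs.1]⟩ (neg_le_neg hst)))
      (by linarith) hδ
  rcases abs_cases (g 0) with ⟨habs, _⟩ | ⟨habs, _⟩ <;> rwa [habs]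

-- The extremal function: `t ↦ k t` with its value raised to `d` on `[0, d / k]`.
noncomputable def plateauLinear (k d : ℝ) (t : ℝ) : ℝ :=
  if t < 0 then k * t else max (k * t) d

theorem monotone_plateauLinear {k : ℝ} (hk : 0 ≤ k) (d : ℝ) :
    Monotone (plateauLinear k d) := by
  intro s t hst
  have hkst : k * s ≤ k * t := mul_le_mul_of_nonneg_left hst hk
  unfold plateauLinear
  split_ifs with hs ht ht
  · exact hkst
  · exact hkst.trans (le_max_left _ _)
  · linarith
  · exact max_le_max hkst le_rfl

theorem plateauLinear_zero (k : ℝ) {d : ℝ} (hd : 0 ≤ d) : plateauLinear k d 0 = d := by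
  simp [plateauLinear, hd]

theorem sq_plateauLinear_sub {k : ℝ} (hk : 0 < k) (d t : ℝ) :
    (plateauLinear k d t - k * t) ^ 2 = (Icc 0 (d / k)).indicator (fun t => (d - k * t) ^ 2) t := by
  unfold plateauLinear
  by_cases ht : 0 ≤ t
  · by_cases htd : t ≤ d / k
    · have : k * t ≤ d := (le_div_iff₀' hk).1 htd
      simp [ht, htd, this, not_lt.2 ht]
    · have : d ≤ k * t := ((div_le_iff₀' hk).1 (not_le.1 htd).le)
      simp [htd, this, not_lt.2 ht]
  · simp [ht, not_le.1 ht]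

theorem integral_sq_plateauLinear_sub {k d a b : ℝ} (hk : 0 < k) (hd : 0 ≤ d) (ha : a < 0)
    (hdb : d ≤ k * b) :
    ∫ t in a..b, (plateauLinear k d t - k * t) ^ 2 = d ^ 3 / (3 * k) := by
  have hdk : 0 ≤ d / k := div_nonneg hd hk.le
  have hsub : Icc 0 (d / k) ⊆ Ioc a b := fun t ht =>
    ⟨ha.trans_le ht.1, ht.2.trans ((div_le_iff₀' hk).2 hdb)⟩
  simp_rw [sq_plateauLinear_sub hk]
  rw [intervalIntegral.integral_of_le (by linarith [hsub ⟨le_rfl, hdk⟩ |>.2]),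
    integral_indicator measurableSet_Icc, Measure.restrict_restrict measurableSet_Icc,
    inter_eq_left.2 hsub, integral_Icc_eq_integral_Ioc, ← intervalIntegral.integral_of_le hdk,
    integral_sq_sub_mul _ _ _ _ hk.ne', mul_div_cancel₀ _ hk.ne']
  ring

theorem modulus_linear_monotone
    (k ε : ℝ) (hk : 0 < k) (hε : 0 < ε) (hε2 : ε^2 ≤ k^2/24) :
    omegaMonotone ε (fun t => k * t) = (3*k) ^ ((1:ℝ)/3) * ε ^ ((2:ℝ)/3) := by
  set d := (3*k) ^ ((1:ℝ)/3) * ε ^ ((2:ℝ)/3)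
  have hd : 0 ≤ d := by positivity
  have hd3 : d ^ 3 = 3 * k * ε ^ 2 := by
    rw [mul_pow, ← Real.rpow_natCast, ← Real.rpow_natCast (ε ^ _),
      ← Real.rpow_mul (by positivity), ← Real.rpow_mul hε.le]
    norm_num
  have hδ : ε ^ 2 ≤ k ^ 2 * (1 / 2) ^ 3 / 3 := by linarith
  have hdk : d ≤ k * (1 / 2) :=
    (pow_le_pow_iff_left₀ hd (by positivity) three_ne_zero).1 (by rw [hd3]; nlinarith)
  have hhalf : -(1 : ℝ) / 2 = -(1 / 2) := neg_div _ _
  refine IsGreatest.csSup_eq ⟨⟨plateauLinear k d, (monotone_plateauLinear hk.le d).monotoneOn _,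
    ?_, by simp [plateauLinear_zero k hd, abs_of_nonneg hd]⟩, ?_⟩
  · rw [integral_sq_plateauLinear_sub hk hd (by norm_num) hdk, hd3,
      mul_div_cancel_left₀ _ (by positivity)]
  · rintro _ ⟨g, hg, hI, rfl⟩
    rw [hhalf] at hg hI
    have h := abs_pow_three_le_of_integral_sq_sub_mul_le hk (by norm_num) hg hI hδ
    rw [← hd3] at h
    simpa using (pow_le_pow_iff_left₀ (abs_nonneg _) hd three_ne_zero).1 h
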